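/- arXiv:2602.14966 — 2 statements merged into one kernel-verified Lean document; each statement's English description precedes it below -/
import Mathlib

section
/- The optimal value-not-at-risk (VnaR) of any Challenge-the-Champ tournament is at most n_p + n_u - 1, where n_p is the number of popular players and n_u is the number of unpopular players that are deterministically beaten by at least one popular player. Concretely: consider the adversarial realization in which every unpopular player not deterministically beaten by any popular player wins all its uncertain matches against popular players; then in any seeding, the total number of matches won by popular players is at most n_p + n_u - 1. -/
/-- The optimal VnaR of a Challenge-the-Champ tournament is at most
`n_p + n_u - 1`.  Players are partitioned into popular players `P`, unpopular
players `U` deterministically beaten by some popular player, and the remaining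
unpopular players `W`.  In the adversarial realization where every player of
`W` wins all its uncertain matches against popular players (so any match
involving a player of `W` is won by an unpopular player), any seeding yields at
most `n_p + n_u - 1` matches won by popular players. -/
theorem stmt_1 (n np nu nw : ℕ) (hn1 : 1 ≤ n) (hn : n = np + nu + nw)
    (P U W : Finset (Fin n))
    (hPU : Disjoint P U) (hPW : Disjoint P W) (hUW : Disjoint U W)
    (hcover : ∀ x : Fin n, x ∈ P ∨ x ∈ U ∨ x ∈ W)
    (hP : P.card = np) (hU : U.card = nu) (hW : W.card = nw)
    -- the seeding
    (σ : Equiv.Perm (Fin n))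
    -- the champion sequence of the realized tournament
    (champ : ℕ → Fin n)
    (hc0 : champ 0 = σ ⟨0, hn1⟩)
    (hstep : ∀ i (h : i + 1 < n),
      champ (i + 1) = champ i ∨ champ (i + 1) = σ ⟨i + 1, h⟩)
    -- adversarial realization: any match involving a player of `W` is won by
    -- an unpopular player
    (hadv : ∀ i (h : i + 1 < n),
      (champ i ∈ W ∨ σ ⟨i + 1, h⟩ ∈ W) → champ (i + 1) ∉ P) :
    ((Finset.range (n - 1)).filter (fun i => champ (i + 1) ∈ P)).card
      ≤ np + nu - 1 := by
  classical
  set S := (Finset.range (n - 1)).filter (fun i => champ (i + 1) ∈ P) with hSdef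
  have hnpos : 0 < n := hn1
  set f : ℕ → Fin n := fun i => σ ⟨(i + 1) % n, Nat.mod_lt _ hnpos⟩ with hfdef
  have hmemS : ∀ i, i ∈ S → i < n - 1 ∧ champ (i + 1) ∈ P := by
    intro i hi
    simpa [hSdef, Finset.mem_filter, Finset.mem_range] using hi
  have hmem : ∀ i ∈ S, f i ∈ P ∪ U := by
    intro i hi
    obtain ⟨hilt, hiP⟩ := hmemS i hi
    have h1 : i + 1 < n := by omega
    have hmod : (i + 1) % n = i + 1 := Nat.mod_eq_of_lt h1
    have hfi : f i = σ ⟨i + 1, h1⟩ := by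
      simp only [hfdef]
      congr 1
      exact Fin.ext hmod
    have hWn : σ ⟨i + 1, h1⟩ ∉ W := fun hw => hadv i h1 (Or.inr hw) hiP
    rw [hfi]
    rcases hcover (σ ⟨i + 1, h1⟩) with h | h | h
    · exact Finset.mem_union_left _ h
    · exact Finset.mem_union_right _ h
    · exact absurd h hWn
  have hinj : Set.InjOn f S := by
    intro a ha b hb hab
    obtain ⟨ha1, -⟩ := hmemS a (by simpa using ha)
    obtain ⟨hb1, -⟩ := hmemS b (by simpa using hb)
    have h := σ.injective hab
    have h2 : (a + 1) % n = (b + 1) % n := by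
      simpa [Fin.ext_iff] using h
    rw [Nat.mod_eq_of_lt (by omega), Nat.mod_eq_of_lt (by omega)] at h2
    omega
  have hcardPU : (P ∪ U).card = np + nu := by
    rw [Finset.card_union_of_disjoint hPU, hP, hU]
  have hle : S.card ≤ np + nu := by
    rw [← hcardPU]
    exact Finset.card_le_card_of_injOn f hmem hinj
  by_contra hcon
  push_neg at hcon
  have h1np : 1 ≤ np + nu := by omega
  have hScard : S.card = np + nu := by omega
  have himg : S.image f = P ∪ U := by
    apply Finset.eq_of_subset_of_card_le
    · intro x hx
      obtain ⟨i, hi, rfl⟩ := Finset.mem_image.mp hx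
      exact hmem i hi
    · rw [hcardPU, Finset.card_image_of_injOn hinj, hScard]
  -- σ 0 ∈ W
  have hfne0 : ∀ i ∈ S, f i ≠ σ ⟨0, hn1⟩ := by
    intro i hi he
    obtain ⟨hilt, -⟩ := hmemS i hi
    have h := σ.injective he
    have h2 : (i + 1) % n = 0 := by simpa [Fin.ext_iff] using h
    rw [Nat.mod_eq_of_lt (by omega)] at h2
    omega
  have hσ0 : σ ⟨0, hn1⟩ ∈ W := by
    rcases hcover (σ ⟨0, hn1⟩) with h | h | h
    · exfalso
      have : σ ⟨0, hn1⟩ ∈ S.image f := himg ▸ Finset.mem_union_left _ h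
      obtain ⟨i, hi, he⟩ := Finset.mem_image.mp this
      exact hfne0 i hi he
    · exfalso
      have : σ ⟨0, hn1⟩ ∈ S.image f := himg ▸ Finset.mem_union_right _ h
      obtain ⟨i, hi, he⟩ := Finset.mem_image.mp this
      exact hfne0 i hi he
    · exact h
  -- every champion is σ of an earlier index
  have hrep : ∀ j, j < n → ∃ m, m ≤ j ∧ ∃ h : m < n, champ j = σ ⟨m, h⟩ := by
    intro j
    induction j with
    | zero => intro _; exact ⟨0, le_refl _, hn1, hc0⟩
    | succ k ih =>
      intro h
      rcases hstep k h with heq | heq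
      · obtain ⟨m, hm, hlt, he⟩ := ih (by omega)
        exact ⟨m, by omega, hlt, heq.trans he⟩
      · exact ⟨k + 1, le_refl _, h, heq⟩
  have hSne : S.Nonempty := Finset.card_pos.mp (by omega)
  set j := S.min' hSne with hjdef
  have hjS : j ∈ S := S.min'_mem hSne
  obtain ⟨hjlt, hjP⟩ := hmemS j hjS
  have hjW : champ j ∉ W := fun hw => hadv j (by omega) (Or.inl hw) hjP
  obtain ⟨m, hmj, hmn, hme⟩ := hrep j (by omega)
  have hm0 : m ≠ 0 := by
    intro h
    subst h
    apply hjW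
    rw [hme]
    convert hσ0 using 2
  have hjPU : champ j ∈ P ∪ U := by
    rcases hcover (champ j) with h | h | h
    · exact Finset.mem_union_left _ h
    · exact Finset.mem_union_right _ h
    · exact absurd h hjW
  rw [← himg] at hjPU
  obtain ⟨i, hiS, hie⟩ := Finset.mem_image.mp hjPU
  obtain ⟨hilt, -⟩ := hmemS i hiS
  have h := σ.injective (hie.trans hme)
  have h2 : (i + 1) % n = m := by simpa [Fin.ext_iff] using h
  rw [Nat.mod_eq_of_lt (by omega)] at h2
  have : j ≤ i := S.min'_le i hiS
  omega
end

section
/- In the reduction from Hamiltonian Path: if the directed graph D on n_p vertices has a Hamiltonian path v^1 → v^2 → … → v^{n_p}, then the seeding ⟨v^{n_p}_p, v^{n_p}_u, v^{n_p-1}_p, v^{n_p-1}_u, …, v^1_p, v^1_u⟩ in the constructed tournament instance consists only of deterministic matches each won by a popular player, and hence has VnaR exactly 2n_p - 1. -/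
/-- Deterministic-win relation of the hardness-reduction instance: popular
players are `Sum.inl`, unpopular copies are `Sum.inr`; `v_p` beats `v_u`,
`a_u` beats `b_p` for `a ≠ b`, and `a_p` beats `b_p` iff `a → b` is an edge of
`D`; all remaining pairs are uncertain. -/
def detRed {m : ℕ} (E : Fin m → Fin m → Prop) :
    (Fin m ⊕ Fin m) → (Fin m ⊕ Fin m) → Prop
  | Sum.inl a, Sum.inl b => E a b
  | Sum.inl a, Sum.inr b => a = b
  | Sum.inr a, Sum.inl b => a ≠ b
  | Sum.inr _, Sum.inr _ => False

/-- Forward direction of the reduction from Hamiltonian Path: if the simple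
digraph `D` (on `m` vertices, edge relation `E`) has a Hamiltonian path
`ham 0 → ham 1 → … → ham (m-1)`, then the seeding
`⟨v^m_p, v^m_u, v^{m-1}_p, v^{m-1}_u, …, v^1_p, v^1_u⟩` in the constructed
tournament instance consists only of deterministic matches, each won by a
popular player; hence all `2m - 1` matches have value 1, and the seeding has
VnaR exactly `2m - 1`. -/
theorem stmt_19 (m : ℕ) (hm : 1 ≤ m) (E : Fin m → Fin m → Prop)
    (hsimple : ∀ a b, ¬(E a b ∧ E b a)) (hirr : ∀ a, ¬ E a a)
    (ham : ℕ → Fin m)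
    (hinj : ∀ i j, i < m → j < m → ham i = ham j → i = j)
    (hpath : ∀ i, i + 1 < m → E (ham i) (ham (i + 1)))
    -- the seeding ⟨v^m_p, v^m_u, …, v^1_p, v^1_u⟩
    (σ : ℕ → Fin m ⊕ Fin m)
    (hσ : ∀ j, j < 2 * m →
      σ j = if j % 2 = 0 then Sum.inl (ham (m - 1 - j / 2))
            else Sum.inr (ham (m - 1 - j / 2)))
    -- an arbitrary realization of the tournament under this seeding
    (champ : ℕ → Fin m ⊕ Fin m)
    (hc0 : champ 0 = σ 0)
    (hstep : ∀ i, i + 1 < 2 * m →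
      (champ (i + 1) = champ i ∧ ¬ detRed E (σ (i + 1)) (champ i)) ∨
      (champ (i + 1) = σ (i + 1) ∧ ¬ detRed E (champ i) (σ (i + 1)))) :
    (∀ i, i + 1 < 2 * m →
      ((champ (i + 1) = champ i ∧ detRed E (champ i) (σ (i + 1))) ∨
       (champ (i + 1) = σ (i + 1) ∧ detRed E (σ (i + 1)) (champ i))) ∧
      (champ (i + 1)).isLeft = true) ∧
    ((Finset.range (2 * m - 1)).filter
      (fun i => (champ (i + 1)).isLeft = true)).card = 2 * m - 1 := by
  -- edge used at each odd-index match
  have hE : ∀ n, n % 2 = 1 → n + 1 < 2 * m →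
      E (ham (m - 1 - (n + 1) / 2)) (ham (m - 1 - n / 2)) := by
    intro n hodd h
    have h1 : (m - 1 - (n + 1) / 2) + 1 = m - 1 - n / 2 := by omega
    have h2 : (m - 1 - (n + 1) / 2) + 1 < m := by omega
    have := hpath (m - 1 - (n + 1) / 2) h2
    rwa [h1] at this
  -- the champion is always the current popular player
  have key : ∀ i, i < 2 * m → champ i = Sum.inl (ham (m - 1 - i / 2)) := by
    intro i
    induction i with
    | zero =>
      intro h
      rw [hc0, hσ 0 h]
      simp
    | succ n ih =>
      intro h
      have hn : n < 2 * m := by omega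
      have hcn := ih hn
      have hσn : σ (n + 1) = if (n + 1) % 2 = 0
          then Sum.inl (ham (m - 1 - (n + 1) / 2))
          else Sum.inr (ham (m - 1 - (n + 1) / 2)) := hσ (n + 1) h
      rcases Nat.even_or_odd n with he | ho
      · -- n even, n+1 odd: σ (n+1) is unpopular copy, champ stays
        have he' : n % 2 = 0 := Nat.even_iff.mp he
        have hmod : (n + 1) % 2 = 1 := by omega
        rw [hmod] at hσn
        simp only [Nat.one_ne_zero, if_false] at hσn
        have hdiv : (n + 1) / 2 = n / 2 := by omega
        rcases hstep n h with ⟨h1, _⟩ | ⟨h1, h2⟩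
        · rw [h1, hcn, hdiv]
        · exfalso
          apply h2
          rw [hcn, hσn, hdiv]
          show ham (m - 1 - n / 2) = ham (m - 1 - n / 2)
          rfl
      · -- n odd, n+1 even: σ (n+1) is next popular player, who wins
        have ho' : n % 2 = 1 := Nat.odd_iff.mp ho
        have hmod : (n + 1) % 2 = 0 := by omega
        rw [hmod] at hσn
        simp only [if_true] at hσn
        have hEn := hE n ho' h
        rcases hstep n h with ⟨_, h2⟩ | ⟨h1, _⟩
        · exfalso
          apply h2
          rw [hcn, hσn]
          exact hEn
        · rw [h1, hσn]
  constructor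
  · intro i h
    have hi : i < 2 * m := by omega
    have hci := key i hi
    have hci1 := key (i + 1) h
    have hσi : σ (i + 1) = if (i + 1) % 2 = 0
        then Sum.inl (ham (m - 1 - (i + 1) / 2))
        else Sum.inr (ham (m - 1 - (i + 1) / 2)) := hσ (i + 1) h
    constructor
    · rcases Nat.even_or_odd i with he | ho
      · have he' : i % 2 = 0 := Nat.even_iff.mp he
        have hmod : (i + 1) % 2 = 1 := by omega
        rw [hmod] at hσi
        simp only [Nat.one_ne_zero, if_false] at hσi
        have hdiv : (i + 1) / 2 = i / 2 := by omega
        left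
        refine ⟨?_, ?_⟩
        · rw [hci1, hci, hdiv]
        · rw [hci, hσi, hdiv]
          show ham (m - 1 - i / 2) = ham (m - 1 - i / 2)
          rfl
      · have ho' : i % 2 = 1 := Nat.odd_iff.mp ho
        have hmod : (i + 1) % 2 = 0 := by omega
        rw [hmod] at hσi
        simp only [if_true] at hσi
        right
        refine ⟨?_, ?_⟩
        · rw [hci1, hσi]
        · rw [hci, hσi]
          exact hE i ho' h
    · rw [hci1]; rfl
  · rw [Finset.filter_true_of_mem, Finset.card_range]
    intro i hi
    rw [Finset.mem_range] at hi
    have : i + 1 < 2 * m := by omega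
    rw [key (i + 1) this]
    rfl
end
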